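/- arXiv:2212.01863 — 6 statements merged into one kernel-verified Lean document; each statement's English description precedes it below -/
import Mathlib

section
/- Let S be an inverse semigroup with 0 and 1, Φ a set of nonzero idempotents, and define S(Φ) to be the set of all s ∈ S such that for every e ∈ Φ, either e s* s = 0, or (e s* s = e and there exists f ∈ Φ with s e = f s and f s s* = f). Then S(Φ) is closed under multiplication. -/
/-- `SPhi star zero Φ` is the set `S(Φ)`: all `s` such that for every `e ∈ Φ`,
either `e (s* s) = 0`, or `e (s* s) = e` and there is `f ∈ Φ` with `s e = f s`, `f (s s*) = f`. -/
def SPhi {S : Type*} [Semigroup S] (star : S → S) (zero : S) (Φ : Set S) : Set S :=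
  {s | ∀ e ∈ Φ, e * (star s * s) = zero ∨
      (e * (star s * s) = e ∧ ∃ f ∈ Φ, s * e = f * s ∧ f * (s * star s) = f)}

/-- `S(Φ)` is closed under multiplication. -/
theorem stmt_5 {S : Type*} [Semigroup S] (star : S → S)
    (h1 : ∀ s : S, s * star s * s = s)
    (h2 : ∀ s : S, star s * s * star s = star s)
    (huniq : ∀ s t : S, s * t * s = s → t * s * t = t → t = star s)
    (zero one : S)
    (hzero : ∀ s : S, zero * s = zero ∧ s * zero = zero)
    (hone : ∀ s : S, one * s = s ∧ s * one = s)
    (Φ : Set S) (hΦ : ∀ e ∈ Φ, e * e = e ∧ e ≠ zero)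
    (s t : S) (hs : s ∈ SPhi star zero Φ) (ht : t ∈ SPhi star zero Φ) :
    s * t ∈ SPhi star zero Φ := by
  -- basic facts
  have dup : ∀ {a : S}, a * a = a → ∀ x : S, a * (a * x) = a * x := by
    intro a h x; rw [← mul_assoc, h]
  have hstar_idem : ∀ {a : S}, a * a = a → star a = a := by
    intro a h
    exact (huniq a a (by rw [h, h]) (by rw [h, h])).symm
  have hss : ∀ a : S, (a * star a) * (a * star a) = a * star a := by
    intro a; rw [mul_assoc, ← mul_assoc (star a), h2]
  have hsss : ∀ a : S, (star a * a) * (star a * a) = star a * a := by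
    intro a; rw [mul_assoc, ← mul_assoc a, h1]
  -- idempotents commute
  have comm : ∀ {a b : S}, a * a = a → b * b = b → a * b = b * a := by
    intro a b ha hb
    have key : ∀ {c d : S}, c * c = c → d * d = d → (c * d) * (c * d) = c * d := by
      intro c d hc hd
      set x := star (c * d) with hx
      have hfex : d * (x * c) = x := by
        apply huniq (c * d)
        · simp only [mul_assoc]
          rw [dup hd, dup hc]
          have := h1 (c * d)
          simpa only [mul_assoc] using this
        · simp only [mul_assoc]
          rw [dup hc, dup hd]
          have h2' := h2 (c * d)
          simp only [mul_assoc] at h2'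
          calc d * (x * (c * (d * (x * c))))
              = d * (x * (c * (d * x)) * c) := by simp only [mul_assoc]
            _ = d * (x * c) := by rw [h2']
      -- x is idempotent
      have hxx : x * x = x := by
        conv_lhs => rw [← hfex]
        have h2' := h2 (c * d)
        simp only [mul_assoc] at h2'
        calc d * (x * c) * (d * (x * c))
            = d * (x * (c * (d * x)) * c) := by simp only [mul_assoc]
          _ = d * (x * c) := by rw [h2']
          _ = x := hfex
      -- hence c*d = star x = x is idempotent
      have hcd : c * d = x := by
        have h3 : c * d = star x := by
          rw [hx]; exact huniq (star (c * d)) (c * d) (h2 _) (h1 _)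
        rw [h3, hstar_idem hxx]
      rw [hcd]; exact hxx
    have hab : (a*b)*(a*b) = a*b := key ha hb
    have hba : (b*a)*(b*a) = b*a := key hb ha
    have hab' := hab; simp only [mul_assoc] at hab'
    have hba' := hba; simp only [mul_assoc] at hba'
    have h1' : b * a = star (a * b) := by
      apply huniq
      · simp only [mul_assoc]; rw [dup hb, dup ha]; exact hab'
      · simp only [mul_assoc]; rw [dup ha, dup hb]; exact hba'
    rw [hstar_idem hab] at h1'
    exact h1'.symm
  have comm' : ∀ {a b : S}, a * a = a → b * b = b → ∀ x : S, a * (b * x) = b * (a * x) := by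
    intro a b ha hb x
    rw [← mul_assoc, comm ha hb, mul_assoc]
  -- star is an anti-homomorphism
  have star_mul : ∀ a b : S, star (a * b) = star b * star a := by
    intro a b
    symm; apply huniq
    · calc a * b * (star b * star a) * (a * b)
          = a * ((b * star b) * (star a * a)) * b := by simp only [mul_assoc]
        _ = a * ((star a * a) * (b * star b)) * b := by rw [comm (hss b) (hsss a)]
        _ = (a * star a * a) * (b * star b * b) := by simp only [mul_assoc]
        _ = a * b := by rw [h1, h1]
    · calc star b * star a * (a * b) * (star b * star a)
          = star b * ((star a * a) * (b * star b)) * star a := by simp only [mul_assoc]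
        _ = star b * ((b * star b) * (star a * a)) * star a := by rw [comm (hsss a) (hss b)]
        _ = (star b * b * star b) * (star a * a * star a) := by simp only [mul_assoc]
        _ = star b * star a := by rw [h2, h2]
  -- now the main proof
  intro e heΦ
  obtain ⟨he, -⟩ := hΦ e heΦ
  have hst : star (s * t) * (s * t) = star t * (star s * s * t) := by
    rw [star_mul]; simp only [mul_assoc]
  rcases ht e heΦ with h0 | ⟨het, f, hfΦ, htef, hftt⟩
  · -- e t* t = 0 ⟹ e (st)*(st) = 0
    left
    rw [hst]
    have key : star t * (star s * s * t) = (star t * t) * (star t * (star s * s * t)) := by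
      calc star t * (star s * s * t)
          = star t * ((star s * s) * (t * star t * t)) := by rw [h1]
        _ = star t * ((t * star t) * ((star s * s) * t)) := by rw [comm' (hsss s) (hss t)]
        _ = (star t * t) * (star t * (star s * s * t)) := by simp only [mul_assoc]
    rw [key, ← mul_assoc, h0, (hzero _).1]
  · obtain ⟨hf, -⟩ := hΦ f hfΦ
    -- e * star t = star t * f
    have hets : e * star t = star t * f := by
      have := congrArg star htef
      rw [star_mul, star_mul, hstar_idem he, hstar_idem hf] at this
      exact this
    rcases hs f hfΦ with h0 | ⟨hfs, g, hgΦ, hsfg, hgss⟩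
    · -- f s* s = 0
      left
      rw [hst]
      calc e * (star t * (star s * s * t))
          = (e * star t) * (star s * s * t) := by simp only [mul_assoc]
        _ = star t * (f * (star s * s) * t) := by rw [hets]; simp only [mul_assoc]
        _ = zero := by rw [h0, (hzero _).1, (hzero _).2]
    · right
      constructor
      · rw [hst]
        calc e * (star t * (star s * s * t))
            = (e * star t) * (star s * s * t) := by simp only [mul_assoc]
          _ = star t * (f * (star s * s) * t) := by rw [hets]; simp only [mul_assoc]
          _ = (star t * f) * t := by rw [hfs]; simp only [mul_assoc]
          _ = (e * star t) * t := by rw [hets]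
          _ = e * (star t * t) := by simp only [mul_assoc]
          _ = e := het
      · refine ⟨g, hgΦ, ?_, ?_⟩
        · calc s * t * e = s * (t * e) := by rw [mul_assoc]
            _ = s * f * t := by rw [htef, mul_assoc]
            _ = g * (s * t) := by rw [hsfg, mul_assoc]
        · calc g * (s * t * star (s * t))
              = g * s * (t * star t) * star s := by rw [star_mul]; simp only [mul_assoc]
            _ = s * (f * (t * star t)) * star s := by rw [← hsfg]; simp only [mul_assoc]
            _ = s * f * star s := by rw [hftt]
            _ = g * (s * star s) := by rw [hsfg, mul_assoc]
            _ = g := hgss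
end

section
/- Let S be an inverse semigroup with 0 and 1, Φ a set of nonzero idempotents, S(Φ) as defined, and S_Φ = S(Φ) ∩ S(Φ)*, where R* = {s* : s ∈ R}. Then S_Φ is an inverse subsemigroup of S (closed under multiplication and under pseudoinverse). -/
section Aux

variable {S : Type*} [Semigroup S]

lemma aux_star_star (star : S → S)
    (h1 : ∀ s : S, s * star s * s = s)
    (h2 : ∀ s : S, star s * s * star s = star s)
    (huniq : ∀ s t : S, s * t * s = s → t * s * t = t → t = star s)
    (s : S) : star (star s) = s :=
  (huniq (star s) s (h2 s) (h1 s)).symm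

lemma aux_idem_star (star : S → S)
    (huniq : ∀ s t : S, s * t * s = s → t * s * t = t → t = star s)
    {e : S} (he : e * e = e) : star e = e :=
  (huniq e e (by rw [he, he]) (by rw [he, he])).symm

lemma aux_idem_sq (star : S → S)
    (h1 : ∀ s : S, s * star s * s = s)
    (h2 : ∀ s : S, star s * s * star s = star s)
    (huniq : ∀ s t : S, s * t * s = s → t * s * t = t → t = star s)
    {e f : S} (he : e * e = e) (hf : f * f = f) : (e * f) * (e * f) = e * f := by
  have he' : ∀ x : S, e * (e * x) = e * x := fun x => by rw [← mul_assoc, he]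
  have hf' : ∀ x : S, f * (f * x) = f * x := fun x => by rw [← mul_assoc, hf]
  have h1ef : e * (f * (star (e*f) * (e * f))) = e * f := by
    have := h1 (e*f); simpa only [mul_assoc] using this
  have h2l : ∀ x : S, star (e*f) * (e * (f * (star (e*f) * x))) = star (e*f) * x := by
    intro x
    have : (star (e*f) * (e*f) * star (e*f)) * x = star (e*f) * x := by rw [h2 (e*f)]
    simpa only [mul_assoc] using this
  have k1 : (e*f) * (f * star (e*f) * e) * (e*f) = e*f := by
    calc (e*f) * (f * star (e*f) * e) * (e*f)
        = e * (f * (f * (star (e*f) * (e * (e * f))))) := by simp only [mul_assoc]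
      _ = e * (f * (star (e*f) * (e * f))) := by rw [hf', he']
      _ = e * f := h1ef
  have k2 : (f * star (e*f) * e) * (e*f) * (f * star (e*f) * e) = f * star (e*f) * e := by
    calc (f * star (e*f) * e) * (e*f) * (f * star (e*f) * e)
        = f * (star (e*f) * (e * (e * (f * (f * (star (e*f) * e)))))) := by
          simp only [mul_assoc]
      _ = f * (star (e*f) * (e * (f * (star (e*f) * e)))) := by rw [he', hf']
      _ = f * (star (e*f) * e) := by rw [h2l]
      _ = f * star (e*f) * e := by rw [mul_assoc]
  have k : f * star (e*f) * e = star (e*f) := huniq (e*f) _ k1 k2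
  have hsq' : (f * star (e*f) * e) * (f * star (e*f) * e) = f * star (e*f) * e := by
    calc (f * star (e*f) * e) * (f * star (e*f) * e)
        = f * (star (e*f) * (e * (f * (star (e*f) * e)))) := by simp only [mul_assoc]
      _ = f * (star (e*f) * e) := by rw [h2l]
      _ = f * star (e*f) * e := by rw [mul_assoc]
  have hsq : star (e*f) * star (e*f) = star (e*f) := by rw [← k]; exact hsq'
  have heq : e * f = star (e*f) :=
    (aux_star_star star h1 h2 huniq (e*f)).symm.trans (aux_idem_star star huniq hsq)
  rw [heq]; exact hsq

lemma aux_idem_comm (star : S → S)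
    (h1 : ∀ s : S, s * star s * s = s)
    (h2 : ∀ s : S, star s * s * star s = star s)
    (huniq : ∀ s t : S, s * t * s = s → t * s * t = t → t = star s)
    {e f : S} (he : e * e = e) (hf : f * f = f) : e * f = f * e := by
  have he' : ∀ x : S, e * (e * x) = e * x := fun x => by rw [← mul_assoc, he]
  have hf' : ∀ x : S, f * (f * x) = f * x := fun x => by rw [← mul_assoc, hf]
  have hef : (e*f) * (e*f) = e*f := aux_idem_sq star h1 h2 huniq he hf
  have hfe : (f*e) * (f*e) = f*e := aux_idem_sq star h1 h2 huniq hf he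
  have hef' : e * (f * (e * f)) = e * f := by simpa only [mul_assoc] using hef
  have hfe' : f * (e * (f * e)) = f * e := by simpa only [mul_assoc] using hfe
  have k1 : (e*f) * (f*e) * (e*f) = e*f := by
    calc (e*f) * (f*e) * (e*f)
        = e * (f * (f * (e * (e * f)))) := by simp only [mul_assoc]
      _ = e * (f * (e * f)) := by rw [hf', he']
      _ = e * f := hef'
  have k2 : (f*e) * (e*f) * (f*e) = f*e := by
    calc (f*e) * (e*f) * (f*e)
        = f * (e * (e * (f * (f * e)))) := by simp only [mul_assoc]
      _ = f * (e * (f * e)) := by rw [he', hf']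
      _ = f * e := hfe'
  have k : f * e = star (e*f) := huniq (e*f) (f*e) k1 k2
  exact (k.trans (aux_idem_star star huniq hef)).symm

lemma aux_star_mul (star : S → S)
    (h1 : ∀ s : S, s * star s * s = s)
    (h2 : ∀ s : S, star s * s * star s = star s)
    (huniq : ∀ s t : S, s * t * s = s → t * s * t = t → t = star s)
    (s t : S) : star (s * t) = star t * star s := by
  have hTT : (t * star t) * (t * star t) = t * star t := by
    rw [← mul_assoc, h1 t]
  have hSS : (star s * s) * (star s * s) = star s * s := by
    rw [← mul_assoc, h2 s]
  have hc : (t * star t) * (star s * s) = (star s * s) * (t * star t) :=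
    aux_idem_comm star h1 h2 huniq hTT hSS
  have k1 : (s*t) * (star t * star s) * (s*t) = s*t := by
    calc (s*t) * (star t * star s) * (s*t)
        = s * ((t * star t) * (star s * s)) * t := by simp only [mul_assoc]
      _ = s * ((star s * s) * (t * star t)) * t := by rw [hc]
      _ = (s * star s * s) * (t * star t * t) := by simp only [mul_assoc]
      _ = s * t := by rw [h1 s, h1 t]
  have k2 : (star t * star s) * (s*t) * (star t * star s) = star t * star s := by
    calc (star t * star s) * (s*t) * (star t * star s)
        = star t * ((star s * s) * (t * star t)) * star s := by simp only [mul_assoc]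
      _ = star t * ((t * star t) * (star s * s)) * star s := by rw [← hc]
      _ = (star t * t * star t) * (star s * s * star s) := by simp only [mul_assoc]
      _ = star t * star s := by rw [h2 t, h2 s]
  exact (huniq (s*t) (star t * star s) k1 k2).symm

lemma aux_sphi_mul (star : S → S)
    (h1 : ∀ s : S, s * star s * s = s)
    (h2 : ∀ s : S, star s * s * star s = star s)
    (huniq : ∀ s t : S, s * t * s = s → t * s * t = t → t = star s)
    (zero : S) (hzero : ∀ s : S, zero * s = zero ∧ s * zero = zero)
    (Φ : Set S) (hΦ : ∀ e ∈ Φ, e * e = e ∧ e ≠ zero)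
    {s t : S} (hs : s ∈ SPhi star zero Φ) (ht : t ∈ SPhi star zero Φ) :
    s * t ∈ SPhi star zero Φ := by
  intro e he
  rw [aux_star_mul star h1 h2 huniq s t]
  have hTT : (t * star t) * (t * star t) = t * star t := by rw [← mul_assoc, h1 t]
  have hSS : (star s * s) * (star s * s) = star s * s := by rw [← mul_assoc, h2 s]
  have hc : (t * star t) * (star s * s) = (star s * s) * (t * star t) :=
    aux_idem_comm star h1 h2 huniq hTT hSS
  rcases ht e he with het | ⟨het, f1, hf1Φ, hte, hf1t⟩
  · -- e * (star t * t) = zero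
    left
    have hsub : (star t * t) * (star t * (star s * (s * t))) = star t * (star s * (s * t)) := by
      calc (star t * t) * (star t * (star s * (s * t)))
          = star t * ((t * star t) * (star s * s)) * t := by simp only [mul_assoc]
        _ = star t * ((star s * s) * (t * star t)) * t := by rw [hc]
        _ = (star t * star s) * (s * (t * star t * t)) := by simp only [mul_assoc]
        _ = star t * (star s * (s * t)) := by rw [h1 t]; simp only [mul_assoc]
    calc e * ((star t * star s) * (s * t))
        = e * ((star t * t) * (star t * (star s * (s * t)))) := by
          rw [hsub]; simp only [mul_assoc]
      _ = (e * (star t * t)) * (star t * (star s * (s * t))) := by simp only [mul_assoc]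
      _ = zero * (star t * (star s * (s * t))) := by rw [het]
      _ = zero := (hzero _).1
  · -- e * (star t * t) = e, t * e = f1 * t, f1 * (t * star t) = f1
    have hestar : e * star t = star t * f1 := by
      have := congrArg star hte
      rwa [aux_star_mul star h1 h2 huniq t e, aux_star_mul star h1 h2 huniq f1 t,
        aux_idem_star star huniq (hΦ e he).1, aux_idem_star star huniq (hΦ f1 hf1Φ).1] at this
    rcases hs f1 hf1Φ with hf1s | ⟨hf1s, f2, hf2Φ, hsf1, hf2s⟩
    · left
      calc e * ((star t * star s) * (s * t))
          = (e * star t) * (star s * (s * t)) := by simp only [mul_assoc]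
        _ = (star t * f1) * (star s * (s * t)) := by rw [hestar]
        _ = star t * ((f1 * (star s * s)) * t) := by simp only [mul_assoc]
        _ = star t * (zero * t) := by rw [hf1s]
        _ = star t * zero := by rw [(hzero t).1]
        _ = zero := (hzero _).2
    · right
      constructor
      · calc e * ((star t * star s) * (s * t))
            = (e * star t) * (star s * (s * t)) := by simp only [mul_assoc]
          _ = (star t * f1) * (star s * (s * t)) := by rw [hestar]
          _ = star t * ((f1 * (star s * s)) * t) := by simp only [mul_assoc]
          _ = star t * (f1 * t) := by rw [hf1s]
          _ = (star t * f1) * t := by rw [mul_assoc]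
          _ = (e * star t) * t := by rw [hestar]
          _ = e * (star t * t) := by rw [mul_assoc]
          _ = e := het
      · refine ⟨f2, hf2Φ, ?_, ?_⟩
        · calc (s * t) * e = s * (t * e) := by rw [mul_assoc]
            _ = s * (f1 * t) := by rw [hte]
            _ = (s * f1) * t := by rw [mul_assoc]
            _ = (f2 * s) * t := by rw [hsf1]
            _ = f2 * (s * t) := by rw [mul_assoc]
        · calc f2 * ((s * t) * (star t * star s))
              = (f2 * s) * (t * (star t * star s)) := by simp only [mul_assoc]
            _ = (s * f1) * (t * (star t * star s)) := by rw [hsf1]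
            _ = s * ((f1 * (t * star t)) * star s) := by simp only [mul_assoc]
            _ = s * (f1 * star s) := by rw [hf1t]
            _ = (s * f1) * star s := by rw [mul_assoc]
            _ = (f2 * s) * star s := by rw [hsf1]
            _ = f2 * (s * star s) := by rw [mul_assoc]
            _ = f2 := hf2s

end Aux

/-- `S_Φ = S(Φ) ∩ S(Φ)*` is an inverse subsemigroup: closed under multiplication
and under the pseudoinverse operation. -/
theorem stmt_6 {S : Type*} [Semigroup S] (star : S → S)
    (h1 : ∀ s : S, s * star s * s = s)
    (h2 : ∀ s : S, star s * s * star s = star s)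
    (huniq : ∀ s t : S, s * t * s = s → t * s * t = t → t = star s)
    (zero one : S)
    (hzero : ∀ s : S, zero * s = zero ∧ s * zero = zero)
    (hone : ∀ s : S, one * s = s ∧ s * one = s)
    (Φ : Set S) (hΦ : ∀ e ∈ Φ, e * e = e ∧ e ≠ zero) :
    (∀ s t : S, s ∈ SPhi star zero Φ ∩ star '' SPhi star zero Φ →
      t ∈ SPhi star zero Φ ∩ star '' SPhi star zero Φ →
      s * t ∈ SPhi star zero Φ ∩ star '' SPhi star zero Φ) ∧
    (∀ s : S, s ∈ SPhi star zero Φ ∩ star '' SPhi star zero Φ →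
      star s ∈ SPhi star zero Φ ∩ star '' SPhi star zero Φ) := by
  constructor
  · rintro s t ⟨hs1, u, huS, hus⟩ ⟨ht1, v, hvS, hvt⟩
    refine ⟨aux_sphi_mul star h1 h2 huniq zero hzero Φ hΦ hs1 ht1,
      v * u, aux_sphi_mul star h1 h2 huniq zero hzero Φ hΦ hvS huS, ?_⟩
    rw [aux_star_mul star h1 h2 huniq v u, hus, hvt]
  · rintro s ⟨hs1, u, huS, hus⟩
    refine ⟨?_, s, hs1, rfl⟩
    have : star s = u := by rw [← hus, aux_star_star star h1 h2 huniq u]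
    rwa [this]
end

section
/- Let X be a metric space, A, B ⊆ X nonempty subsets, and ρ_A, ρ_B the associated compatible metrics on the double of X defined by ρ_A(x,y') = inf_{a∈A}[d(x,a)+1+d(a,y)]. If the Hausdorff distance between A and B is finite, then ρ_A and ρ_B are coarsely equivalent. -/
/-- The metric `ρ_A` on the double `X ⊔ X`. -/
noncomputable def rhoA {X : Type*} [MetricSpace X] (A : Set X) : X ⊕ X → X ⊕ X → ℝ
  | Sum.inl x, Sum.inl y => dist x y
  | Sum.inr x, Sum.inr y => dist x y
  | Sum.inl x, Sum.inr y => ⨅ a : A, (dist x (a : X) + 1 + dist (a : X) y)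
  | Sum.inr x, Sum.inl y => ⨅ a : A, (dist y (a : X) + 1 + dist (a : X) x)

/-- Coarse equivalence of two metrics via a monotone homeomorphism `φ` of `(0,∞)`. -/
def CoarseEquiv {Y : Type*} (ρ σ : Y → Y → ℝ) : Prop :=
  ∃ φ : ℝ → ℝ, StrictMonoOn φ (Set.Ioi 0) ∧ Set.MapsTo φ (Set.Ioi 0) (Set.Ioi 0) ∧
    Set.SurjOn φ (Set.Ioi 0) (Set.Ioi 0) ∧
    ∀ y₁ y₂ : Y, ρ y₁ y₂ ≤ φ (σ y₁ y₂) ∧ σ y₁ y₂ ≤ φ (ρ y₁ y₂)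

lemma mixed_ge_one {X : Type*} [MetricSpace X] {A : Set X} (hA : A.Nonempty) (x y : X) :
    (1 : ℝ) ≤ ⨅ a : A, (dist x (a : X) + 1 + dist (a : X) y) := by
  haveI := hA.to_subtype
  refine le_ciInf fun a => ?_
  have := dist_nonneg (x := x) (y := (a : X))
  have := dist_nonneg (x := (a : X)) (y := y)
  linarith

lemma mixed_le {X : Type*} [MetricSpace X] {A B : Set X} (hA : A.Nonempty) (hB : B.Nonempty)
    {C : ℝ} (hBA : ∀ b ∈ B, ∃ a ∈ A, dist a b ≤ C) (x y : X) :
    (⨅ a : A, (dist x (a : X) + 1 + dist (a : X) y)) ≤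
      (⨅ b : B, (dist x (b : X) + 1 + dist (b : X) y)) + 2 * C := by
  haveI := hA.to_subtype
  haveI := hB.to_subtype
  have hbdd : BddBelow (Set.range fun a : A => dist x (a : X) + 1 + dist (a : X) y) := by
    refine ⟨0, ?_⟩
    rintro _ ⟨a, rfl⟩
    have := dist_nonneg (x := x) (y := (a : X))
    have := dist_nonneg (x := (a : X)) (y := y)
    simp only
    linarith
  rw [← sub_le_iff_le_add]
  refine le_ciInf fun b => ?_
  obtain ⟨a, haA, hab⟩ := hBA b b.2
  have hinf := ciInf_le hbdd (⟨a, haA⟩ : A)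
  simp only at hinf
  have h1 : dist x a ≤ dist x (b : X) + C := by
    have := dist_triangle x (b : X) a
    have : dist (b : X) a ≤ C := by rw [dist_comm]; exact hab
    have := dist_triangle x (b : X) a
    linarith
  have h2 : dist a y ≤ C + dist (b : X) y := by
    have := dist_triangle a (b : X) y
    linarith
  linarith

/-- If the Hausdorff distance between `A` and `B` is finite, then `ρ_A` and `ρ_B`
are coarsely equivalent. -/
theorem stmt_8 {X : Type*} [MetricSpace X] (A B : Set X)
    (hA : A.Nonempty) (hB : B.Nonempty) (C : ℝ) (hC : 0 < C)
    (hAB : ∀ a ∈ A, ∃ b ∈ B, dist a b ≤ C)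
    (hBA : ∀ b ∈ B, ∃ a ∈ A, dist a b ≤ C) :
    CoarseEquiv (rhoA A) (rhoA B) := by
  have hc1 : (0 : ℝ) < 1 + 2 * C := by linarith
  refine ⟨fun t => (1 + 2 * C) * t, ?_, ?_, ?_, ?_⟩
  · intro a _ b _ hab
    exact mul_lt_mul_of_pos_left hab hc1
  · intro t ht
    exact mul_pos hc1 ht
  · intro s hs
    refine ⟨s / (1 + 2 * C), div_pos hs hc1, ?_⟩
    field_simp
  · intro y₁ y₂
    have hAB' : ∀ a ∈ A, ∃ b ∈ B, dist b a ≤ C := fun a ha =>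
      (hAB a ha).imp fun b ⟨hb, h⟩ => ⟨hb, by rwa [dist_comm]⟩
    -- key estimates
    have key : ∀ (S T : Set X), S.Nonempty → T.Nonempty →
        (∀ t ∈ T, ∃ s ∈ S, dist s t ≤ C) →
        ∀ x y : X, (⨅ a : S, (dist x (a : X) + 1 + dist (a : X) y)) ≤
          (1 + 2 * C) * (⨅ b : T, (dist x (b : X) + 1 + dist (b : X) y)) := by
      intro S T hS hT hTS x y
      have h1 := mixed_le hS hT hTS x y
      have h2 := mixed_ge_one hT x y
      nlinarith
    rcases y₁ with x | x <;> rcases y₂ with y | y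
    · simp only [rhoA]
      have := dist_nonneg (x := x) (y := y)
      constructor <;> nlinarith
    · exact ⟨key A B hA hB hBA x y, key B A hB hA hAB' x y⟩
    · exact ⟨key A B hA hB hBA y x, key B A hB hA hAB' y x⟩
    · simp only [rhoA]
      have := dist_nonneg (x := x) (y := y)
      constructor <;> nlinarith
end

section
/- Let X be a metric space, A, B ⊆ X nonempty subsets with infinite Hausdorff distance (for every C > 0, some point of A is at distance > C from B, or some point of B is at distance > C from A). Then the metrics ρ_A and ρ_B on the double of X are not coarsely equivalent. -/
lemma rho_self_mem {X : Type*} [MetricSpace X] {A : Set X} {a : X} (ha : a ∈ A) :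
    rhoA A (Sum.inl a) (Sum.inr a) = 1 := by
  show (⨅ c : A, (dist a (c : X) + 1 + dist (c : X) a)) = 1
  haveI : Nonempty A := ⟨⟨a, ha⟩⟩
  apply le_antisymm
  · have hb : BddBelow (Set.range fun c : A => dist a (c : X) + 1 + dist (c : X) a) := by
      refine ⟨0, ?_⟩
      rintro _ ⟨c, rfl⟩
      dsimp only
      have := dist_nonneg (x := a) (y := (c : X))
      have := dist_nonneg (x := (c : X)) (y := a)
      linarith
    have := ciInf_le hb (⟨a, ha⟩ : A)
    simpa using this
  · apply le_ciInf
    intro c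
    have h1 := dist_nonneg (x := a) (y := (c : X))
    have h2 := dist_nonneg (x := (c : X)) (y := a)
    linarith

lemma rho_far {X : Type*} [MetricSpace X] {B : Set X} (hB : B.Nonempty) {x : X} {C : ℝ}
    (h : ∀ b ∈ B, C < dist x b) :
    2 * C + 1 ≤ rhoA B (Sum.inl x) (Sum.inr x) := by
  show 2 * C + 1 ≤ ⨅ b : B, (dist x (b : X) + 1 + dist (b : X) x)
  haveI : Nonempty B := hB.to_subtype
  apply le_ciInf
  intro b
  have h1 := h b b.2
  have h2 : dist (b : X) x = dist x (b : X) := dist_comm _ _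
  linarith

/-- If the Hausdorff distance between `A` and `B` is infinite, then `ρ_A` and `ρ_B`
are not coarsely equivalent. -/
theorem stmt_9 {X : Type*} [MetricSpace X] (A B : Set X)
    (hA : A.Nonempty) (hB : B.Nonempty)
    (hinf : ∀ C : ℝ, 0 < C →
      (∃ a ∈ A, ∀ b ∈ B, C < dist a b) ∨ (∃ b ∈ B, ∀ a ∈ A, C < dist a b)) :
    ¬ CoarseEquiv (rhoA A) (rhoA B) := by
  rintro ⟨φ, hmono, hmaps, hsurj, hφ⟩
  have h1 : (0 : ℝ) < φ 1 := hmaps (Set.mem_Ioi.mpr one_pos)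
  rcases hinf (φ 1) h1 with ⟨a, ha, hfar⟩ | ⟨b, hb, hfar⟩
  · have hle := (hφ (Sum.inl a) (Sum.inr a)).2
    rw [rho_self_mem ha] at hle
    have := rho_far hB hfar
    linarith
  · have hle := (hφ (Sum.inl b) (Sum.inr b)).1
    rw [rho_self_mem hb] at hle
    have hfar' : ∀ a ∈ A, φ 1 < dist b a := by
      intro a ha; rw [dist_comm]; exact hfar a ha
    have := rho_far hA hfar'
    linarith
end

section
/- For λ, μ ∈ (1, ∞) with λ ≠ μ, the Hausdorff distance between the subsets A_λ = {λⁿ : n ∈ ℕ} and A_μ = {μⁿ : n ∈ ℕ} of [0,∞) is infinite. -/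
lemma stmt_10_aux (l m : ℝ) (hl : 1 < l) (hm : 1 < m) (hlm : l < m) (C : ℝ) (hC : 0 < C)
    (h1 : ∀ x ∈ Set.range (fun n : ℕ => l ^ n), ∃ y ∈ Set.range (fun n : ℕ => m ^ n), |x - y| ≤ C)
    (h2 : ∀ y ∈ Set.range (fun n : ℕ => m ^ n), ∃ x ∈ Set.range (fun n : ℕ => l ^ n), |x - y| ≤ C) :
    False := by
  have he : 0 < min (l - 1) (m - l) := lt_min (by linarith) (by linarith)
  obtain ⟨k, hk⟩ := pow_unbounded_of_one_lt ((l + 1) * C / min (l - 1) (m - l)) hm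
  have hk' : (l + 1) * C < min (l - 1) (m - l) * m ^ k := by
    rw [div_lt_iff₀ he] at hk; linarith [hk]
  obtain ⟨x, ⟨n, rfl⟩, hxd⟩ := h2 (m ^ k) ⟨k, rfl⟩
  obtain ⟨y, ⟨j, rfl⟩, hyd⟩ := h1 (l ^ (n + 1)) ⟨n + 1, rfl⟩
  simp only at hxd hyd
  obtain ⟨ha, hb⟩ := abs_le.mp hxd
  obtain ⟨hc, hd⟩ := abs_le.mp hyd
  have hmk : (0:ℝ) < m ^ k := pow_pos (by linarith) k
  have hmin1 : min (l - 1) (m - l) ≤ l - 1 := min_le_left _ _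
  have hmin2 : min (l - 1) (m - l) ≤ m - l := min_le_right _ _
  have hps : l ^ (n + 1) = l ^ n * l := pow_succ l n
  have hms : m ^ (k + 1) = m ^ k * m := pow_succ m k
  -- lower bound: l^(n+1) > m^k + C
  have hx1 : m ^ k + C < l ^ (n + 1) := by
    have : (m ^ k - C) * l ≤ l ^ n * l := by nlinarith
    nlinarith
  -- upper bound: l^(n+1) < m^(k+1) - C
  have hx2 : l ^ (n + 1) < m ^ (k + 1) - C := by
    have : l ^ n * l ≤ (m ^ k + C) * l := by nlinarith
    nlinarith
  rcases le_or_gt j k with hj | hj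
  · have : m ^ j ≤ m ^ k := pow_le_pow_right₀ (by linarith) hj
    linarith
  · have : m ^ (k + 1) ≤ m ^ j := pow_le_pow_right₀ (by linarith) hj
    linarith

/-- For `λ, μ ∈ (1,∞)` with `λ ≠ μ`, the Hausdorff distance between
`A_λ = {λⁿ : n ∈ ℕ}` and `A_μ = {μⁿ : n ∈ ℕ}` in `[0,∞)` is infinite. -/
theorem stmt_10 (l m : ℝ) (hl : 1 < l) (hm : 1 < m) (hlm : l ≠ m) :
    ¬ ∃ C : ℝ, 0 < C ∧
      (∀ x ∈ Set.range (fun n : ℕ => l ^ n), ∃ y ∈ Set.range (fun n : ℕ => m ^ n), |x - y| ≤ C) ∧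
      (∀ y ∈ Set.range (fun n : ℕ => m ^ n), ∃ x ∈ Set.range (fun n : ℕ => l ^ n), |x - y| ≤ C) := by
  rintro ⟨C, hC, h1, h2⟩
  rcases hlm.lt_or_gt with h | h
  · exact stmt_10_aux l m hl hm h C hC h1 h2
  · refine stmt_10_aux m l hm hl h C hC ?_ ?_
    · intro x hx
      obtain ⟨y, hy, hxy⟩ := h2 x hx
      exact ⟨y, hy, by rwa [abs_sub_comm]⟩
    · intro y hy
      obtain ⟨x, hx, hxy⟩ := h1 y hy
      exact ⟨x, hx, by rwa [abs_sub_comm]⟩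
end

section
/- The set of coarse equivalence classes of metrics on the double of [0,∞) compatible with the standard metric has cardinality at least continuum. -/
/-- A compatible metric on the double of `X`: symmetric, vanishing exactly on the diagonal,
satisfying the triangle inequality, and restricting to the metric of `X` on each copy. -/
def IsCompatibleDoubleMetric {X : Type*} [MetricSpace X] (ρ : X ⊕ X → X ⊕ X → ℝ) : Prop :=
  (∀ p q, ρ p q = ρ q p) ∧ (∀ p q, ρ p q = 0 ↔ p = q) ∧
  (∀ p q r, ρ p r ≤ ρ p q + ρ q r) ∧
  (∀ x y : X, ρ (Sum.inl x) (Sum.inl y) = dist x y ∧ ρ (Sum.inr x) (Sum.inr y) = dist x y)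

/-! ### Auxiliary constructions -/

/-- Distance across the double, gluing through the set `{l ^ n}` with a gap of `1`. -/
noncomputable def crossD (l x y : ℝ) : ℝ := ⨅ n : ℕ, (|x - l ^ n| + 1 + |l ^ n - y|)

/-- Distance from `x` to the set `{l ^ n}`. -/
noncomputable def gdist (l x : ℝ) : ℝ := ⨅ n : ℕ, |x - l ^ n|

lemma crossD_bdd (l x y : ℝ) :
    BddBelow (Set.range fun n : ℕ => |x - l ^ n| + 1 + |l ^ n - y|) := by
  refine ⟨0, ?_⟩; rintro _ ⟨n, rfl⟩; positivity

lemma gdist_bdd (l x : ℝ) : BddBelow (Set.range fun n : ℕ => |x - l ^ n|) := by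
  refine ⟨0, ?_⟩; rintro _ ⟨n, rfl⟩; positivity

lemma crossD_ge (l x y : ℝ) : |x - y| + 1 ≤ crossD l x y := by
  refine le_ciInf fun n => ?_
  have h := abs_sub_le x (l ^ n) y
  linarith

lemma crossD_le (l x y : ℝ) (n : ℕ) : crossD l x y ≤ |x - l ^ n| + 1 + |l ^ n - y| :=
  ciInf_le (crossD_bdd l x y) n

lemma gdist_le (l x : ℝ) (n : ℕ) : gdist l x ≤ |x - l ^ n| := ciInf_le (gdist_bdd l x) n

lemma crossD_symm (l x y : ℝ) : crossD l x y = crossD l y x := by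
  unfold crossD
  congr 1; funext n
  rw [abs_sub_comm x (l ^ n), abs_sub_comm (l ^ n) y]
  ring

lemma crossD_tri_left (l x x' y : ℝ) : crossD l x y ≤ |x - x'| + crossD l x' y := by
  rw [← sub_le_iff_le_add']
  refine le_ciInf fun n => ?_
  rw [sub_le_iff_le_add']
  have h1 := crossD_le l x y n
  have h2 := abs_sub_le x x' (l ^ n)
  linarith

lemma crossD_tri_right (l x y y' : ℝ) : crossD l x y ≤ crossD l x y' + |y' - y| := by
  rw [crossD_symm l x y, crossD_symm l x y']
  have h := crossD_tri_left l y y' x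
  rw [abs_sub_comm y y'] at h
  linarith

lemma crossD_self_ge (l x : ℝ) : 2 * gdist l x + 1 ≤ crossD l x x := by
  refine le_ciInf fun n => ?_
  have h1 := gdist_le l x n
  have h2 : |l ^ n - x| = |x - l ^ n| := abs_sub_comm _ _
  linarith

lemma gdist_tri (l x y : ℝ) : gdist l x ≤ |x - y| + gdist l y := by
  rw [← sub_le_iff_le_add']
  refine le_ciInf fun n => ?_
  rw [sub_le_iff_le_add']
  have h1 := gdist_le l x n
  have h2 := abs_sub_le x y (l ^ n)
  linarith

lemma crossD_pos (l x y : ℝ) : 0 < crossD l x y := by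
  have h := crossD_ge l x y
  have := abs_nonneg (x - y)
  linarith

/-- The compatible metric on the double of `[0,∞)` determined by the parameter `l`. -/
noncomputable def Fm (l : ℝ) :
    (Set.Ici (0:ℝ)) ⊕ (Set.Ici (0:ℝ)) → (Set.Ici (0:ℝ)) ⊕ (Set.Ici (0:ℝ)) → ℝ
  | Sum.inl x, Sum.inl y => dist x y
  | Sum.inl x, Sum.inr y => crossD l x.1 y.1
  | Sum.inr x, Sum.inl y => crossD l x.1 y.1
  | Sum.inr x, Sum.inr y => dist x y

lemma Fm_compat (l : ℝ) : IsCompatibleDoubleMetric (Fm l) := by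
  refine ⟨?_, ?_, ?_, fun x y => ⟨rfl, rfl⟩⟩
  · rintro (x|x) (y|y) <;> simp [Fm, dist_comm, crossD_symm]
  · rintro (x|x) (y|y)
    · simp [Fm]
    · simp only [Fm]
      constructor
      · intro h; exact absurd h (crossD_pos l x.1 y.1).ne'
      · intro h; exact absurd h (by simp)
    · simp only [Fm]
      constructor
      · intro h; exact absurd h (crossD_pos l x.1 y.1).ne'
      · intro h; exact absurd h (by simp)
    · simp [Fm]
  · rintro (x|x) (y|y) (z|z) <;>
      simp only [Fm, Subtype.dist_eq, Real.dist_eq]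
    · exact abs_sub_le _ _ _
    · exact crossD_tri_left l x.1 y.1 z.1
    · have h1 := crossD_ge l x.1 y.1
      have h2 := crossD_ge l y.1 z.1
      have h3 := abs_sub_le x.1 y.1 z.1
      linarith
    · exact crossD_tri_right l x.1 z.1 y.1
    · exact crossD_tri_right l x.1 z.1 y.1
    · have h1 := crossD_ge l x.1 y.1
      have h2 := crossD_ge l y.1 z.1
      have h3 := abs_sub_le x.1 y.1 z.1
      linarith
    · exact crossD_tri_left l x.1 y.1 z.1
    · exact abs_sub_le _ _ _

lemma exists_pow_near {l : ℝ} (hl : 1 < l) {x : ℝ} (hx : 1 ≤ x) :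
    ∃ k : ℕ, |x - l ^ k| * (l + 1) ≤ (l - 1) * x := by
  classical
  have hl0 : (0:ℝ) < l := by linarith
  have hP : ∃ n : ℕ, x < l ^ n := pow_unbounded_of_one_lt x hl
  have hxN : x < l ^ Nat.find hP := Nat.find_spec hP
  have hN0 : Nat.find hP ≠ 0 := by
    intro h
    rw [h] at hxN
    simp at hxN
    linarith
  obtain ⟨k, hk'⟩ := Nat.exists_eq_succ_of_ne_zero hN0
  have hk : ¬ x < l ^ k := Nat.find_min hP (by omega)
  push_neg at hk
  rw [hk'] at hxN
  rw [Nat.succ_eq_add_one] at hxN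
  have hl1 : (0:ℝ) < l + 1 := by linarith
  have hpow : (0:ℝ) < l ^ k := pow_pos hl0 k
  by_cases hc : 2 * x ≤ l ^ k * (1 + l)
  · refine ⟨k, ?_⟩
    rw [abs_of_nonneg (by linarith)]
    nlinarith
  · refine ⟨k + 1, ?_⟩
    push_neg at hc
    rw [abs_of_nonpos (by linarith), pow_succ]
    nlinarith

lemma gdist_mid_ge {m : ℝ} (hm : 1 < m) (n : ℕ) :
    m ^ n * (m - 1) / 2 ≤ gdist m (m ^ n * (1 + m) / 2) := by
  refine le_ciInf fun k => ?_
  set x := m ^ n * (1 + m) / 2 with hx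
  rcases le_or_gt k n with hk | hk
  · have h1 : m ^ k ≤ m ^ n := pow_le_pow_right₀ (by linarith) hk
    have h2 : m ^ n * (m - 1) / 2 ≤ x - m ^ k := by rw [hx]; nlinarith
    exact h2.trans (le_abs_self _)
  · have h1 : m ^ (n + 1) ≤ m ^ k := pow_le_pow_right₀ (by linarith) hk
    have hp : m ^ (n + 1) = m ^ n * m := pow_succ m n
    have h2 : m ^ n * (m - 1) / 2 ≤ m ^ k - x := by rw [hx]; nlinarith
    refine h2.trans ?_
    rw [abs_sub_comm]
    exact le_abs_self _

lemma key {l m : ℝ} (hl : 1 < l) (hlm : l < m) : ¬ CoarseEquiv (Fm l) (Fm m) := by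
  rintro ⟨φ, -, -, -, hφ⟩
  have hm : 1 < m := hl.trans hlm
  set r := φ 1 with hr
  -- Every point `l ^ n` is within `(r-1)/2` of the set `{m ^ k}`.
  have hA : ∀ n : ℕ, gdist m (l ^ n) ≤ (r - 1) / 2 := by
    intro n
    have hx : (0:ℝ) ≤ l ^ n := (pow_pos (by linarith) n).le
    set a : (Set.Ici (0:ℝ)) := ⟨l ^ n, hx⟩ with ha
    have h2 := (hφ (Sum.inl a) (Sum.inr a)).2
    have hup : crossD l (l ^ n) (l ^ n) ≤ 1 := by
      have h := crossD_le l (l ^ n) (l ^ n) n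
      simp at h
      linarith
    have hlow : (1:ℝ) ≤ crossD l (l ^ n) (l ^ n) := by
      have h := crossD_ge l (l ^ n) (l ^ n)
      simp at h
      linarith
    have hFl : Fm l (Sum.inl a) (Sum.inr a) = 1 := le_antisymm hup hlow
    rw [hFl] at h2
    have hFm : 2 * gdist m (l ^ n) + 1 ≤ Fm m (Sum.inl a) (Sum.inr a) :=
      crossD_self_ge m (l ^ n)
    rw [← hr] at h2
    linarith
  -- Choose `n` so that the gap near `m ^ n` is too large.
  have hml : (0:ℝ) < m - l := by linarith
  have hl1 : (0:ℝ) < l + 1 := by linarith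
  obtain ⟨n, hn⟩ := pow_unbounded_of_one_lt ((r - 1) * (l + 1) / (2 * (m - l))) hm
  have hpn : (1:ℝ) ≤ m ^ n := one_le_pow₀ hm.le
  have hx1 : (1:ℝ) ≤ m ^ n * (1 + m) / 2 := by nlinarith
  obtain ⟨k, hk⟩ := exists_pow_near hl hx1
  have h1 := gdist_tri m (m ^ n * (1 + m) / 2) (l ^ k)
  have h2 := hA k
  have h3 := gdist_mid_ge hm n
  have h7 : (r - 1) * (l + 1) < m ^ n * (2 * (m - l)) := by
    rw [div_lt_iff₀ (by linarith : (0:ℝ) < 2 * (m - l))] at hn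
    linarith
  have hE : m ^ n * (m - 1) / 2 ≤ |m ^ n * (1 + m) / 2 - l ^ k| + (r - 1) / 2 := by linarith
  have hF := mul_le_mul_of_nonneg_right hE hl1.le
  nlinarith [hk, hF, h7]

lemma coarseEquiv_symm {Y : Type*} {ρ σ : Y → Y → ℝ} (h : CoarseEquiv ρ σ) :
    CoarseEquiv σ ρ := by
  obtain ⟨φ, h1, h2, h3, h4⟩ := h
  exact ⟨φ, h1, h2, h3, fun a b => ⟨(h4 a b).2, (h4 a b).1⟩⟩

/-- There are at least continuum many coarse equivalence classes of metrics on the double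
of `[0,∞)` compatible with the standard metric: there is a family of compatible metrics
indexed by `ℝ` that are pairwise non coarsely equivalent. -/
theorem stmt_11 :
    ∃ F : ℝ → ((Set.Ici (0:ℝ)) ⊕ (Set.Ici (0:ℝ)) → (Set.Ici (0:ℝ)) ⊕ (Set.Ici (0:ℝ)) → ℝ),
      (∀ t : ℝ, IsCompatibleDoubleMetric (F t)) ∧
      ∀ s t : ℝ, s ≠ t → ¬ CoarseEquiv (F s) (F t) := by
  refine ⟨fun t => Fm (Real.exp t + 2), fun t => Fm_compat _, ?_⟩
  intro s t hst
  have h1 : (1:ℝ) < Real.exp s + 2 := by linarith [Real.exp_pos s]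
  have h1' : (1:ℝ) < Real.exp t + 2 := by linarith [Real.exp_pos t]
  rcases lt_trichotomy s t with h | h | h
  · exact key h1 (by simpa using Real.exp_lt_exp.2 h)
  · exact absurd h hst
  · intro hc
    exact key h1' (by simpa using Real.exp_lt_exp.2 h) (coarseEquiv_symm hc)
end
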